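/- Let f(x) = ∑_{m≥0} q^{C(m+1,2)} x^m and write 1/f(x) = ∑_{n≥0} u(n,q) x^n. Then for n ≥ 1, u(n,q) = -q^n · ∑_{j=0}^{n-1} (-1)^j · ⟨n-1, j⟩_q, where ⟨m, j⟩_q is the coefficient of x^{m-j} in f(x)^{j+1}. -/

import Mathlib

noncomputable def f : PowerSeries (Polynomial ℚ) :=
  PowerSeries.mk fun m => (Polynomial.X : Polynomial ℚ) ^ Nat.choose (m + 1) 2

noncomputable def angle (n k : ℕ) : Polynomial ℚ :=
  PowerSeries.coeff (n - k) (f ^ (k + 1))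

/-- `u(n,q)`, the coefficient of `x^n` in `1/f(x)`. -/
noncomputable def u (n : ℕ) : Polynomial ℚ :=
  PowerSeries.coeff n (PowerSeries.invOfUnit f 1)

/-!
Since `binom(m+2, 2) = binom(m+1, 2) + (m+1)`, the series satisfies `f(x) = 1 + q x f(q x)`.
Expanding `1/(1 + h)` as the alternating geometric series in `h = q x f(q x)`, only the
powers `h^j` with `j ≤ n` reach `x^n`, and the coefficient of `x^n` in `h^j` is
`q^n` times the coefficient of `x^(n-j)` in `f^j`. The term `j = 0` vanishes for `n ≥ 1`.
-/

open PowerSeries Finset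

namespace PowerSeries

variable {R : Type*} [CommRing R]

theorem coeff_invOfUnit_one_add {h : R⟦X⟧} (hh : constantCoeff h = 0) (n : ℕ) :
    coeff n (invOfUnit (1 + h) 1) = ∑ j ∈ range (n + 1), (-1) ^ j * coeff n (h ^ j) := by
  set v := invOfUnit (1 + h) 1
  have hv : (1 + h) * v = 1 := mul_invOfUnit _ _ (by simp [hh])
  have hgeom : (1 + h) * ∑ j ∈ range (n + 1), (-h) ^ j = 1 - (-h) ^ (n + 1) := by
    simpa using mul_neg_geom_sum (-h) (n + 1)
  have hpartial : ∑ j ∈ range (n + 1), (-h) ^ j = v - (-h) ^ (n + 1) * v := by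
    linear_combination v * hgeom - (∑ j ∈ range (n + 1), (-h) ^ j) * hv
  have htail : coeff n ((-h) ^ (n + 1) * v) = 0 := by
    have hX : X ∣ -h := X_dvd_iff.mpr (by simp [hh])
    exact X_pow_dvd_iff.mp (dvd_mul_of_dvd_left (pow_dvd_pow_of_dvd hX _) _) n n.lt_succ_self
  calc coeff n v = coeff n (∑ j ∈ range (n + 1), (-h) ^ j) := by
        rw [hpartial, map_sub, htail, sub_zero]
    _ = ∑ j ∈ range (n + 1), (-1) ^ j * coeff n (h ^ j) := by
        simp only [map_sum, neg_pow h, ← map_one (C (R := R)), ← map_neg, ← map_pow, coeff_C_mul]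

theorem coeff_rescale_X_mul_pow (a : R) (h : R⟦X⟧) {n j : ℕ} (hj : j ≤ n) :
    coeff n (rescale a (X * h) ^ j) = a ^ n * coeff (n - j) (h ^ j) := by
  rw [← map_pow, coeff_rescale, mul_pow, coeff_X_pow_mul', if_pos hj]

end PowerSeries

theorem f_eq_one_add_rescale : f = 1 + rescale Polynomial.X (X * f) := by
  ext (_ | m)
  · simp [f]
  · rw [map_add, coeff_rescale, coeff_succ_X_mul, coeff_one, if_neg m.succ_ne_zero, zero_add]
    simp only [f, coeff_mk, ← pow_add]
    rw [Nat.choose_succ_succ (m + 1) 1, Nat.choose_one_right, add_comm]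

theorem reciprocal_coeff (n : ℕ) (hn : 1 ≤ n) :
    u n = -Polynomial.X ^ n * ∑ j ∈ Finset.range n, (-1) ^ j * angle (n - 1) j := by
  have hh : constantCoeff (rescale Polynomial.X (X * f)) = 0 := by simp
  have hterm : ∀ j ∈ range (n + 1), (-1) ^ j * coeff n (rescale Polynomial.X (X * f) ^ j) =
      (-1) ^ j * Polynomial.X ^ n * coeff (n - j) (f ^ j) := fun j hj => by
    rw [coeff_rescale_X_mul_pow _ _ (Nat.lt_succ_iff.mp (mem_range.mp hj)), mul_assoc]
  rw [u, f_eq_one_add_rescale, coeff_invOfUnit_one_add hh, sum_congr rfl hterm,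
    sum_range_succ']
  simp only [pow_zero, Nat.sub_zero, coeff_one, if_neg (show n ≠ 0 by omega), mul_zero, add_zero,
    mul_sum]
  refine sum_congr rfl fun j _ => ?_
  rw [angle, show n - (j + 1) = n - 1 - j by omega]
  ring
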